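/- Let V = ℝ^n, let 0 < d ≤ n and 0 < r ≤ n - d, and let W be a linear subspace of ⋀^r V. Then there exists a nonzero real polynomial H in n² variables such that whenever H(F) ≠ 0, the matrix F is invertible and dim π^F_{[n-d]}(W) / C(n-d, r) ≥ (dim W) / C(n, r), where [n-d] = {1, …, n-d}. -/

import Mathlib

/-!
In the basis `e_S` of `⋀^r ℝ^n` indexed by the `r`-subsets `S` of `[n]`, a `k`-dimensional `W`
has `k` pivot coordinates `T`, with vectors `u_t ∈ W` whose `T`-coordinates are `δ_{S t}`.
Averaging over the `(n - d)`-subsets `J` of `[n]`, some `J` contains at least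
`k C(n-d, r) / C(n, r)` members of `T`. The coordinate projection onto `span{e_j : j ∈ J}` is
`π^P_{[n-d]}` for a permutation matrix `P` and fixes the coordinates `S ⊆ J`, so the minor
`[e_S^*(⋀π^F u_t)]_{S, t ∈ T, S, t ⊆ J}` is nonzero at `F = P`. Once `F⁻¹` is replaced by
`adj F` this minor is a polynomial in `F`; times `det F` it is `H`, and wherever `H` does not
vanish the vectors `⋀π^F u_t` (`t ⊆ J`) are independent.
-/

/-- The projection `π^F_J : ℝ^n → span{f_j : j ∈ J}` determined by the columns
`f_1, …, f_n` of `F`: it fixes `f_j` for `j ∈ J` and kills `f_j` for `j ∉ J`. -/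
noncomputable def projMap (n : ℕ) (F : Matrix (Fin n) (Fin n) ℝ) (J : Finset (Fin n)) :
    (Fin n → ℝ) →ₗ[ℝ] (Fin n → ℝ) :=
  Matrix.toLin' (F * Matrix.diagonal (fun j => if j ∈ J then (1 : ℝ) else 0) * F⁻¹)

noncomputable def projImage (n : ℕ) (F : Matrix (Fin n) (Fin n) ℝ) (J : Finset (Fin n))
    (W : Submodule ℝ (ExteriorAlgebra ℝ (Fin n → ℝ))) :
    Submodule ℝ (ExteriorAlgebra ℝ (Fin n → ℝ)) :=
  Submodule.map (ExteriorAlgebra.map (projMap n F J)).toLinearMap W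

open Finset Matrix Set.powersetCard

theorem Module.Basis.exists_biorthogonal_submodule {K E ι : Type*} [Field K] [AddCommGroup E]
    [Module K E] [Fintype ι] [DecidableEq ι] (b : Module.Basis ι K E) (W : Submodule K E) :
    ∃ (T : Finset ι) (u : ι → W), #T = Module.finrank K W ∧
      ∀ i ∈ T, ∀ j ∈ T, b.coord i (u j) = if i = j then 1 else 0 := by
  classical
  have := Module.Finite.of_basis b
  let φ : ι → Module.Dual K W := fun i => b.coord i ∘ₗ W.subtype
  have hφ : Submodule.span K (Set.range φ) = ⊤ := by
    refine eq_top_iff.2 fun f _ => ?_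
    obtain ⟨g, rfl⟩ := LinearMap.dualMap_surjective_of_injective W.injective_subtype f
    rw [← b.sum_dual_apply_smul_coord g, map_sum]
    refine Submodule.sum_mem _ fun i _ => ?_
    rw [map_smul]
    exact Submodule.smul_mem _ _ (Submodule.subset_span ⟨i, rfl⟩)
  obtain ⟨κ, a, ha, hspan, hli⟩ := exists_linearIndependent' K φ
  have : Fintype κ := Fintype.ofInjective a ha
  let β := Module.Basis.mk hli (by rw [hspan, hφ])
  refine ⟨univ.map ⟨a, ha⟩, Function.extend a (fun j => (Module.evalEquiv K W).symm (β.coord j)) 0,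
    ?_, ?_⟩
  · rw [card_map, card_univ, ← Module.finrank_eq_card_basis β, Subspace.dual_finrank_eq]
  · simp only [mem_map, mem_univ, true_and, Function.Embedding.coeFn_mk]
    rintro _ ⟨i, rfl⟩ _ ⟨j, rfl⟩
    rw [ha.extend_apply, show ∀ w : W, b.coord (a i) w = β i w from fun w => by simp [β, φ],
      Module.apply_evalEquiv_symm_apply, β.coord_apply, β.repr_self, Finsupp.single_apply]
    exact if_congr ha.eq_iff.symm rfl rfl

theorem Finset.exists_card_mul_choose_le_card_filter_subset {α : Type*} [Fintype α]
    [DecidableEq α] {r m : ℕ} (T : Finset (Set.powersetCard α r)) (hrm : r ≤ m)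
    (hm : m ≤ Fintype.card α) :
    ∃ J : Finset α, #J = m ∧ #T * m.choose r ≤
      #(T.filter fun S : Set.powersetCard α r => S.val ⊆ J) * (Fintype.card α).choose r := by
  have hcount : ∑ J ∈ powersetCard m univ, #(T.filter fun S : Set.powersetCard α r => S.val ⊆ J) =
      #T * (Fintype.card α - r).choose (m - r) := by
    simp_rw [card_filter]
    rw [sum_comm]
    simp_rw [← card_filter]
    rw [sum_const_nat fun S _ => ?_]
    rw [card_filter_powersetCard_subset _ _ _ (subset_univ _) (by simpa using hrm), card_univ,
      Set.powersetCard.card_eq]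
  obtain ⟨J, hJ, hle⟩ := exists_le_of_sum_le (s := powersetCard m univ)
    (powersetCard_nonempty.2 (by rwa [card_univ]))
    (f := fun _ => #T * m.choose r)
    (g := fun J => #(T.filter fun S : Set.powersetCard α r => S.val ⊆ J) *
      (Fintype.card α).choose r) <| by
      rw [sum_const, card_powersetCard, card_univ, ← sum_mul, hcount, smul_eq_mul]
      refine le_of_eq ?_
      calc (Fintype.card α).choose m * (#T * m.choose r)
          = #T * ((Fintype.card α).choose m * m.choose r) := by ring
        _ = _ := by rw [Nat.choose_mul hrm, mul_comm (Nat.choose _ r), mul_assoc]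
  exact ⟨J, (mem_powersetCard.1 hJ).2, hle⟩

theorem Equiv.Perm.exists_mem_iff_mem {α : Type*} [Fintype α] [DecidableEq α] {J J' : Finset α}
    (h : #J = #J') : ∃ σ : Equiv.Perm α, ∀ i, σ i ∈ J' ↔ i ∈ J := by
  let e := Finset.equivOfCardEq h
  exact ⟨e.extendSubtype, fun i =>
    ⟨fun hi => by_contra fun hiJ => e.extendSubtype_not_mem i hiJ hi, e.extendSubtype_mem i⟩⟩

theorem Matrix.permMatrix_mul_diagonal {n R : Type*} [Fintype n] [DecidableEq n] [Semiring R]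
    (σ : Equiv.Perm n) (d : n → R) :
    σ.permMatrix R * diagonal d = diagonal (d ∘ σ) * σ.permMatrix R := by
  ext i j
  rw [mul_diagonal, diagonal_mul, Equiv.Perm.permMatrix, PEquiv.toMatrix_apply]
  by_cases h : σ i = j <;> simp [h]

theorem Matrix.permMatrix_mul_diagonal_mul_adjugate {n R : Type*} [Fintype n] [DecidableEq n]
    [CommRing R] {J J' : Finset n} {σ : Equiv.Perm n} (hσ : ∀ i, σ i ∈ J' ↔ i ∈ J) :
    σ.permMatrix R * diagonal (fun j => if j ∈ J' then 1 else 0) * (σ.permMatrix R).adjugate =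
      (σ.permMatrix R).det • diagonal fun j => if j ∈ J then 1 else 0 := by
  rw [permMatrix_mul_diagonal, mul_assoc, mul_adjugate, Matrix.mul_smul, mul_one]
  congr
  funext i
  simp [hσ]

namespace exteriorPower

section Functoriality

variable {R M N : Type*} [CommRing R] [AddCommGroup M] [Module R M] [AddCommGroup N] [Module R N]

theorem subtype_comp_map (r : ℕ) (f : M →ₗ[R] N) :
    (⋀[R]^r N).subtype ∘ₗ map r f =
      (ExteriorAlgebra.map f).toLinearMap ∘ₗ (⋀[R]^r M).subtype := by
  ext v
  simp [ExteriorAlgebra.map_apply_ιMulti]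

theorem exteriorAlgebraMap_map_subtype (r : ℕ) (f : M →ₗ[R] N) (W : Submodule R (⋀[R]^r M)) :
    (W.map (⋀[R]^r M).subtype).map (ExteriorAlgebra.map f).toLinearMap =
      (W.map (map r f)).map (⋀[R]^r N).subtype := by
  rw [← Submodule.map_comp, ← Submodule.map_comp, subtype_comp_map]

theorem map_smul (r : ℕ) (c : R) (f : M →ₗ[R] N) : map r (c • f) = c ^ r • map r f := by
  ext v
  simp [AlternatingMap.map_smul_univ]

end Functoriality

section Coordinates

variable {R ι : Type*} [CommRing R] [Fintype ι] [LinearOrder ι] [DecidableEq ι] {r : ℕ}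

theorem coord_map_toLin'_basis (A : Matrix ι ι R) (s t : Set.powersetCard ι r) :
    ((Pi.basisFun R ι).exteriorPower r).coord s
        (map r (toLin' A) ((Pi.basisFun R ι).exteriorPower r t)) =
      (A.submatrix (ofFinEmbEquiv.symm s) (ofFinEmbEquiv.symm t)).det := by
  rw [basis_coord, basis_apply, map_apply_ιMulti_family, ιMulti_family, ιMultiDual_apply_ιMulti,
    ← det_transpose]
  congr
  ext i j
  simp [Matrix.toLin'_apply, mulVec_single]

theorem exists_mvPolynomial_eval_eq_coord_map {σ : Type*} (Q : Matrix ι ι (MvPolynomial σ R))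
    (x : ⋀[R]^r (ι → R)) (s : Set.powersetCard ι r) :
    ∃ q : MvPolynomial σ R, ∀ v : σ → R, MvPolynomial.eval v q =
      ((Pi.basisFun R ι).exteriorPower r).coord s
        (map r (toLin' (Q.map (MvPolynomial.eval v))) x) := by
  set B := (Pi.basisFun R ι).exteriorPower r
  refine ⟨∑ t, MvPolynomial.C (B.repr x t) *
    (Q.submatrix (ofFinEmbEquiv.symm s) (ofFinEmbEquiv.symm t)).det, fun v => ?_⟩
  conv_rhs => rw [← B.sum_repr x]
  simp only [map_sum, _root_.map_smul, MvPolynomial.eval_C, map_mul, RingHom.map_det, smul_eq_mul,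
    B, coord_map_toLin'_basis]
  rfl

theorem map_toLin'_diagonal_basis (J : Finset ι) (t : Set.powersetCard ι r) :
    map r (toLin' (diagonal fun j => if j ∈ J then (1 : R) else 0))
        ((Pi.basisFun R ι).exteriorPower r t) =
      if (t : Finset ι) ⊆ J then (Pi.basisFun R ι).exteriorPower r t else 0 := by
  rw [basis_apply, map_apply_ιMulti_family, ιMulti_family, ιMulti_family]
  split_ifs with htJ
  · congr 1
    funext i
    have hi : ofFinEmbEquiv.symm t i ∈ J :=
      htJ <| (mem_range_ofFinEmbEquiv_symm_iff_mem t _).1 ⟨i, rfl⟩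
    simp [hi]
  · obtain ⟨j, hjt, hjJ⟩ := Finset.not_subset.1 htJ
    obtain ⟨i, rfl⟩ := (mem_range_ofFinEmbEquiv_symm_iff_mem t j).2 hjt
    exact (ιMulti R r).map_coord_zero i (by simp [hjJ])

theorem coord_map_toLin'_diagonal_of_subset {J : Finset ι} {s : Set.powersetCard ι r}
    (hsJ : (s : Finset ι) ⊆ J) (x : ⋀[R]^r (ι → R)) :
    ((Pi.basisFun R ι).exteriorPower r).coord s
        (map r (toLin' (diagonal fun j => if j ∈ J then (1 : R) else 0)) x) =
      ((Pi.basisFun R ι).exteriorPower r).coord s x := by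
  rw [← LinearMap.comp_apply]
  congr 1
  refine ((Pi.basisFun R ι).exteriorPower r).ext fun t => ?_
  rw [LinearMap.comp_apply, map_toLin'_diagonal_basis]
  split_ifs with htJ
  · rfl
  · have hts : t ≠ s := fun h => htJ (h ▸ hsJ)
    rw [map_zero, Module.Basis.coord_apply, Module.Basis.repr_self,
      Finsupp.single_eq_of_ne hts.symm]

end Coordinates

theorem exists_mvPolynomial_linearIndependent_map {K ι κ σ : Type*} [Field K] [Fintype ι]
    [LinearOrder ι] [DecidableEq ι] [Fintype κ] [DecidableEq κ] {r : ℕ}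
    (Q : Matrix ι ι (MvPolynomial σ K)) (u : κ → ⋀[K]^r (ι → K)) (s : κ → Set.powersetCard ι r)
    (v₀ : σ → K) (h₀ : (Matrix.of fun i j => ((Pi.basisFun K ι).exteriorPower r).coord (s i)
      (map r (toLin' (Q.map (MvPolynomial.eval v₀))) (u j))).det ≠ 0) :
    ∃ H : MvPolynomial σ K, H ≠ 0 ∧ ∀ v, MvPolynomial.eval v H ≠ 0 →
      LinearIndependent K fun j => map r (toLin' (Q.map (MvPolynomial.eval v))) (u j) := by
  choose q hq using fun i j => exists_mvPolynomial_eval_eq_coord_map Q (u j) (s i)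
  have heval : ∀ v, MvPolynomial.eval v (Matrix.of q).det =
      (Matrix.of fun i j => ((Pi.basisFun K ι).exteriorPower r).coord (s i)
        (map r (toLin' (Q.map (MvPolynomial.eval v))) (u j))).det := fun v => by
    rw [RingHom.map_det]
    congr
    ext i j
    exact hq i j v
  refine ⟨(Matrix.of q).det, fun hH => h₀ ?_, fun v hv => ?_⟩
  · rw [← heval, hH, map_zero]
  · exact .of_comp (LinearMap.pi fun i => ((Pi.basisFun K ι).exteriorPower r).coord (s i))
      (linearIndependent_cols_of_det_ne_zero (heval v ▸ hv))

end exteriorPower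

/-- `det X` times the matrix of `π^X_J`, for the generic matrix `X`. -/
noncomputable def adjugateProj (ι K : Type*) [Fintype ι] [DecidableEq ι] [CommRing K]
    (J : Finset ι) : Matrix ι ι (MvPolynomial (ι × ι) K) :=
  mvPolynomialX ι ι K * diagonal (fun j => if j ∈ J then 1 else 0) * (mvPolynomialX ι ι K).adjugate

theorem adjugateProj_map_eval {ι K : Type*} [Fintype ι] [DecidableEq ι] [CommRing K]
    (J : Finset ι) (F : Matrix ι ι K) :
    (adjugateProj ι K J).map (MvPolynomial.eval fun p => F p.1 p.2) =
      F * diagonal (fun j => if j ∈ J then 1 else 0) * F.adjugate := by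
  rw [adjugateProj, ← RingHom.mapMatrix_apply, map_mul, map_mul, RingHom.map_adjugate,
    mvPolynomialX_mapMatrix_eval, RingHom.mapMatrix_apply, diagonal_map (map_zero _)]
  simp

theorem exteriorPower_map_adjugateProj_eval {n r : ℕ} (J : Finset (Fin n))
    {F : Matrix (Fin n) (Fin n) ℝ} (hF : F.det ≠ 0) :
    exteriorPower.map r (toLin' ((adjugateProj (Fin n) ℝ J).map
        (MvPolynomial.eval fun p => F p.1 p.2))) =
      F.det ^ r • exteriorPower.map r (projMap n F J) := by
  rw [adjugateProj_map_eval, ← exteriorPower.map_smul, projMap, ← map_smul, Matrix.inv_def,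
    Matrix.mul_smul, smul_smul, Ring.inverse_eq_inv', mul_inv_cancel₀ hF, one_smul]

theorem det_coord_map_adjugateProj_permMatrix_ne_zero {K ι : Type*} [Field K] [Fintype ι]
    [LinearOrder ι] [DecidableEq ι] {r : ℕ} {J J₀ : Finset ι} {σ : Equiv.Perm ι}
    (hσ : ∀ i, σ i ∈ J₀ ↔ i ∈ J) (𝒮 : Finset (Set.powersetCard ι r))
    (h𝒮 : ∀ S ∈ 𝒮, S.val ⊆ J) (u : Set.powersetCard ι r → ⋀[K]^r (ι → K))
    (hu : ∀ S ∈ 𝒮, ∀ S' ∈ 𝒮,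
      ((Pi.basisFun K ι).exteriorPower r).coord S (u S') = if S = S' then 1 else 0) :
    (Matrix.of fun S S' : 𝒮 => ((Pi.basisFun K ι).exteriorPower r).coord S
      (exteriorPower.map r (toLin' ((adjugateProj ι K J₀).map
        (MvPolynomial.eval fun p => σ.permMatrix K p.1 p.2))) (u S'))).det ≠ 0 := by
  have hPdet : (σ.permMatrix K).det ≠ 0 := by
    rw [det_permutation]
    rcases Int.units_eq_one_or (Equiv.Perm.sign σ) with h | h <;> simp [h]
  have hdiag : (Matrix.of fun S S' : 𝒮 => ((Pi.basisFun K ι).exteriorPower r).coord S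
      (exteriorPower.map r (toLin' ((adjugateProj ι K J₀).map
        (MvPolynomial.eval fun p => σ.permMatrix K p.1 p.2))) (u S'))) =
        (σ.permMatrix K).det ^ r • 1 := by
    ext S S'
    rw [of_apply, adjugateProj_map_eval, permMatrix_mul_diagonal_mul_adjugate hσ, map_smul,
      exteriorPower.map_smul, LinearMap.smul_apply, map_smul,
      exteriorPower.coord_map_toLin'_diagonal_of_subset (h𝒮 S S.2), hu S S.2 S' S'.2]
    by_cases h : S = S'
    · simp [h]
    · simp [h, Subtype.ext_iff.not.1 h]
  rw [hdiag, det_smul, det_one, mul_one]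
  exact pow_ne_zero _ (pow_ne_zero _ hPdet)

theorem exists_mvPolynomial_finrank_mul_choose_le_finrank_map_projMap {n r : ℕ}
    (W : Submodule ℝ (⋀[ℝ]^r (Fin n → ℝ))) {J₀ : Finset (Fin n)} (hr : r ≤ #J₀) :
    ∃ H : MvPolynomial (Fin n × Fin n) ℝ, H ≠ 0 ∧ ∀ F : Matrix (Fin n) (Fin n) ℝ,
      MvPolynomial.eval (fun p => F p.1 p.2) H ≠ 0 → IsUnit F ∧
        Module.finrank ℝ W * (#J₀).choose r ≤
          Module.finrank ℝ (W.map (exteriorPower.map r (projMap n F J₀))) * n.choose r := by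
  obtain ⟨T, u, hTW, hu⟩ :=
    ((Pi.basisFun ℝ (Fin n)).exteriorPower r).exists_biorthogonal_submodule W
  obtain ⟨J, hJ, hTJ⟩ := T.exists_card_mul_choose_le_card_filter_subset hr
    (by simpa using card_le_univ J₀)
  obtain ⟨σ, hσ⟩ := Equiv.Perm.exists_mem_iff_mem hJ
  let 𝒮 := T.filter fun S : Set.powersetCard (Fin n) r => S.val ⊆ J
  have hP := det_coord_map_adjugateProj_permMatrix_ne_zero hσ 𝒮
    (fun S hS => (mem_filter.1 hS).2) (fun S => (u S : ⋀[ℝ]^r (Fin n → ℝ)))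
    fun S hS S' hS' => hu S (mem_filter.1 hS).1 S' (mem_filter.1 hS').1
  obtain ⟨H, hH, hHli⟩ := exteriorPower.exists_mvPolynomial_linearIndependent_map _ _ _ _ hP
  refine ⟨(mvPolynomialX (Fin n) (Fin n) ℝ).det * H,
    mul_ne_zero (det_mvPolynomialX_ne_zero _ _) hH, fun F hF => ?_⟩
  rw [map_mul, RingHom.map_det, mvPolynomialX_mapMatrix_eval] at hF
  obtain ⟨hdet, hHF⟩ := mul_ne_zero_iff.1 hF
  refine ⟨(isUnit_iff_isUnit_det F).2 hdet.isUnit, ?_⟩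
  have hli := hHli _ hHF
  rw [exteriorPower_map_adjugateProj_eval J₀ hdet] at hli
  have hspan : Submodule.span ℝ (Set.range fun S : 𝒮 =>
      (F.det ^ r • exteriorPower.map r (projMap n F J₀)) (u S)) ≤
        W.map (exteriorPower.map r (projMap n F J₀)) := by
    rw [Submodule.span_le, ← Submodule.map_smul _ _ _ (pow_ne_zero r hdet)]
    rintro _ ⟨S, rfl⟩
    exact Submodule.mem_map_of_mem (u S).2
  calc Module.finrank ℝ W * (#J₀).choose r ≤ #𝒮 * n.choose r := by
        simpa [hTW, hJ] using hTJ
    _ ≤ _ := by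
      gcongr
      rw [← Fintype.card_coe 𝒮, ← finrank_span_eq_card hli]
      exact Submodule.finrank_mono hspan

theorem generic_projection_preserves_fraction_general (n r d : ℕ)
    (hrd : r ≤ n - d)
    (W : Submodule ℝ (ExteriorAlgebra ℝ (Fin n → ℝ)))
    (hWle : W ≤ ⋀[ℝ]^r (Fin n → ℝ)) :
    ∃ H : MvPolynomial (Fin n × Fin n) ℝ, H ≠ 0 ∧
      ∀ F : Matrix (Fin n) (Fin n) ℝ,
        MvPolynomial.eval (fun p => F p.1 p.2) H ≠ 0 →
          IsUnit F ∧
          (Module.finrank ℝ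
              (projImage n F (Finset.univ.filter (fun j : Fin n => (j : ℕ) < n - d)) W) : ℝ) /
                ((n - d).choose r) ≥
            (Module.finrank ℝ W : ℝ) / (n.choose r) := by
  obtain ⟨W, rfl⟩ : ∃ W' : Submodule ℝ (⋀[ℝ]^r (Fin n → ℝ)), W'.map (⋀[ℝ]^r _).subtype = W :=
    ⟨W.comap _, by rw [Submodule.map_comap_subtype, inf_eq_right.2 hWle]⟩
  have hJ₀ : #(univ.filter fun j : Fin n => (j : ℕ) < n - d) = n - d := by
    simp [Fin.card_filter_val_lt]
  obtain ⟨H, hH, hgen⟩ :=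
    exists_mvPolynomial_finrank_mul_choose_le_finrank_map_projMap W (hJ₀ ▸ hrd)
  refine ⟨H, hH, fun F hF => ⟨(hgen F hF).1, ?_⟩⟩
  have hrank := (hgen F hF).2
  rw [hJ₀] at hrank
  rw [projImage, exteriorPower.exteriorAlgebraMap_map_subtype, Submodule.finrank_map_subtype_eq,
    Submodule.finrank_map_subtype_eq, ge_iff_le, div_le_div_iff₀
      (Nat.cast_pos.2 (Nat.choose_pos (hrd.trans (Nat.sub_le n d))))
      (Nat.cast_pos.2 (Nat.choose_pos hrd))]
  exact_mod_cast hrank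

/-- For `0 < d ≤ n`, `0 < r ≤ n - d` and `W ⊆ ⋀^r ℝ^n`, there is a nonzero polynomial
`H` in the `n²` matrix entries such that `H(F) ≠ 0` implies `F` is invertible and the
projection onto the first `n - d` coordinates of the basis given by `F` preserves the
dimensional fraction of `W`. -/
theorem generic_projection_preserves_fraction (n r d : ℕ)
    (hd : 0 < d) (hdn : d ≤ n) (hr : 0 < r) (hrd : r ≤ n - d)
    (W : Submodule ℝ (ExteriorAlgebra ℝ (Fin n → ℝ)))
    (hWle : W ≤ ⋀[ℝ]^r (Fin n → ℝ)) :
    ∃ H : MvPolynomial (Fin n × Fin n) ℝ, H ≠ 0 ∧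
      ∀ F : Matrix (Fin n) (Fin n) ℝ,
        MvPolynomial.eval (fun p => F p.1 p.2) H ≠ 0 →
          IsUnit F ∧
          (Module.finrank ℝ
              (projImage n F (Finset.univ.filter (fun j : Fin n => (j : ℕ) < n - d)) W) : ℝ) /
                ((n - d).choose r) ≥
            (Module.finrank ℝ W : ℝ) / (n.choose r) :=
  generic_projection_preserves_fraction_general n r d hrd W hWle
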